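/- arXiv:2508.15560 — 2 statements merged into one kernel-verified Lean document; each statement's English description precedes it below -/
import Mathlib

section
/- Let N ≥ 2, 1 ≤ k ≤ N−1, c > 0, and let Λ ∈ ℝ^N be the vector whose first k entries are 0 and whose remaining N−k entries all equal c, so T = (N−k)c. With β_k = (1/N)(1 − √(k/((N−1)(N−k)))) and Λ_{β_k} = Λ − β_k(T,...,T), one has σ_1(Λ_{β_k}) > 0 and σ_2(Λ_{β_k}) = 0. -/
noncomputable def sigma1 (N : ℕ) (a : Fin N → ℝ) : ℝ := ∑ i, a i

noncomputable def sigma2 (N : ℕ) (a : Fin N → ℝ) : ℝ :=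
  ∑ i, ∑ j ∈ Finset.univ.filter (fun j => i < j), a i * a j

noncomputable def beta (N k : ℕ) : ℝ :=
  (1 / N) * (1 - Real.sqrt ((k : ℝ) / (((N : ℝ) - 1) * ((N : ℝ) - k))))


/-
For `Λ_β = Λ - βT·𝟙` one has `σ₁(Λ_β) = (1 - Nβ) T`, and the identity `2σ₂ = σ₁² - ‖·‖²` gives
`2σ₂(Λ_β) = T² (N(N-1)β² - 2(N-1)β + 1 - 1/(N-k))`. So `σ₂(Λ_β) = 0` exactly when `β` is a root
of this quadratic; `β_k` is its smaller root, and for it `1 - Nβ_k = √(k/((N-1)(N-k))) > 0`.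
-/

open Finset

theorem Finset.sq_sum_eq_sum_sq_add_two_mul_sum_lt {ι R : Type*} [LinearOrder ι] [CommSemiring R]
    (s : Finset ι) (a : ι → R) :
    (∑ i ∈ s, a i) ^ 2 = ∑ i ∈ s, a i ^ 2 + 2 * ∑ i ∈ s, ∑ j ∈ s with i < j, a i * a j := by
  induction s using Finset.induction_on_max with
  | empty => simp
  | insert m s hlt ih =>
    have hm : m ∉ s := fun h => lt_irrefl _ (hlt m h)
    have hmax : ∑ j ∈ insert m s with m < j, a m * a j = 0 :=
      sum_eq_zero fun j hj => by
        obtain ⟨rfl | hj, hmj⟩ := by simpa using hj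
        · exact absurd hmj (lt_irrefl _)
        · exact absurd (hlt j hj) hmj.asymm
    have hlower : ∀ i ∈ s, ∑ j ∈ insert m s with i < j, a i * a j
        = a i * a m + ∑ j ∈ s with i < j, a i * a j := fun i hi => by
      rw [filter_insert, if_pos (hlt i hi), sum_insert (by simp [hm])]
    rw [sum_insert hm, sum_insert hm, sum_insert hm, add_sq, ih, hmax, sum_congr rfl hlower,
      sum_add_distrib, ← sum_mul]
    ring

theorem two_mul_sigma2 (N : ℕ) (a : Fin N → ℝ) :
    2 * sigma2 N a = sigma1 N a ^ 2 - ∑ i, a i ^ 2 := by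
  rw [sigma1, sigma2, sq_sum_eq_sum_sq_add_two_mul_sum_lt]
  ring

theorem sigma1_sub_const (N : ℕ) (a : Fin N → ℝ) (t : ℝ) :
    sigma1 N (fun i => a i - t) = sigma1 N a - N * t := by
  simp [sigma1, sum_sub_distrib]

theorem two_mul_sigma2_sub_const (N : ℕ) (a : Fin N → ℝ) (t : ℝ) :
    2 * sigma2 N (fun i => a i - t)
      = 2 * sigma2 N a - 2 * (N - 1) * t * sigma1 N a + N * (N - 1) * t ^ 2 := by
  have hsq : ∑ i, (a i - t) ^ 2 = ∑ i, a i ^ 2 - 2 * t * sigma1 N a + N * t ^ 2 := by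
    simp [sub_sq, sum_add_distrib, sum_sub_distrib, sigma1, mul_sum, sum_mul, mul_comm,
      mul_left_comm]
  rw [two_mul_sigma2, two_mul_sigma2, sigma1_sub_const, hsq]
  ring

theorem Fin.sum_ite_val_lt {M : Type*} [AddCommMonoid M] {N k : ℕ} (hk : k ≤ N) (x y : M) :
    ∑ i : Fin N, (if (i : ℕ) < k then x else y) = k • x + (N - k) • y := by
  rw [sum_ite, Finset.sum_const, Finset.sum_const, filter_not,
    card_sdiff_of_subset (filter_subset _ _), Fin.card_filter_val_lt, min_eq_right hk, card_univ,
    Fintype.card_fin]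

theorem one_sub_mul_beta {N : ℕ} (hN : N ≠ 0) (k : ℕ) :
    1 - N * beta N k = √((k : ℝ) / ((N - 1) * (N - k))) := by
  rw [beta]
  field_simp
  ring

theorem sub_one_mul_sub_mul_sq_sqrt_div {N k : ℕ} (hk : k < N) :
    ((N : ℝ) - 1) * (N - k) * √((k : ℝ) / ((N - 1) * (N - k))) ^ 2 = k := by
  have hNk : (k : ℝ) + 1 ≤ N := by exact_mod_cast hk
  rcases Nat.eq_zero_or_pos k with rfl | hk0
  · simp
  have hk1 : (1 : ℝ) ≤ k := by exact_mod_cast hk0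
  have hden : 0 < ((N : ℝ) - 1) * (N - k) := mul_pos (by linarith) (by linarith)
  rw [Real.sq_sqrt (div_nonneg (by linarith) hden.le), mul_div_cancel₀ _ hden.ne']

theorem sub_mul_quadratic_beta_eq_one {N k : ℕ} (hk : k < N) :
    (N - k) * (N * (N - 1) * beta N k ^ 2 - 2 * (N - 1) * beta N k + 1) = (1 : ℝ) := by
  have hN : N ≠ 0 := by omega
  refine mul_left_cancel₀ (Nat.cast_ne_zero.mpr hN) ?_
  linear_combination (N - k) * (N - 1) * (1 - N * beta N k + √((k : ℝ) / ((N - 1) * (N - k))))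
    * one_sub_mul_beta hN k + sub_one_mul_sub_mul_sq_sqrt_div hk

theorem stmt_10_general (N k : ℕ) (hk1 : 1 ≤ k) (hk2 : k ≤ N - 1)
    (c : ℝ) (hc : 0 < c)
    (Λ : Fin N → ℝ) (hΛ : ∀ i : Fin N, Λ i = if (i : ℕ) < k then 0 else c)
    (T : ℝ) (hT : T = ((N : ℝ) - k) * c) :
    0 < sigma1 N (fun i => Λ i - beta N k * T) ∧
      sigma2 N (fun i => Λ i - beta N k * T) = 0 := by
  have hkN : k < N := by omega
  have hΛsum : sigma1 N Λ = T := by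
    simp only [sigma1, hΛ, Fin.sum_ite_val_lt hkN.le, smul_zero, zero_add, nsmul_eq_mul,
      Nat.cast_sub hkN.le, hT]
  have hΛsq : ∑ i, Λ i ^ 2 = T * c := by
    simp only [hΛ, apply_ite (· ^ 2), Fin.sum_ite_val_lt hkN.le, nsmul_eq_mul, Nat.cast_sub hkN.le,
      hT]
    ring
  constructor
  · have hkN' : (k : ℝ) + 1 ≤ N := by exact_mod_cast hkN
    have hk1' : (1 : ℝ) ≤ k := by exact_mod_cast hk1
    have hs : 0 < √((k : ℝ) / ((N - 1) * (N - k))) :=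
      Real.sqrt_pos.mpr (div_pos (by linarith) (mul_pos (by linarith) (by linarith)))
    have hT0 : 0 < T := hT ▸ mul_pos (by linarith) hc
    rw [sigma1_sub_const, hΛsum, show T - N * (beta N k * T) = (1 - N * beta N k) * T by ring,
      one_sub_mul_beta (by omega)]
    exact mul_pos hs hT0
  · have h2 := two_mul_sigma2_sub_const N Λ (beta N k * T)
    rw [two_mul_sigma2 N Λ, hΛsum, hΛsq] at h2
    subst hT
    linear_combination h2 / 2 + ((N - k) * c * c / 2) * sub_mul_quadratic_beta_eq_one hkN

theorem stmt_10 (N k : ℕ) (hN : 2 ≤ N) (hk1 : 1 ≤ k) (hk2 : k ≤ N - 1)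
    (c : ℝ) (hc : 0 < c)
    (Λ : Fin N → ℝ) (hΛ : ∀ i : Fin N, Λ i = if (i : ℕ) < k then 0 else c)
    (T : ℝ) (hT : T = ((N : ℝ) - k) * c) :
    0 < sigma1 N (fun i => Λ i - beta N k * T) ∧
      sigma2 N (fun i => Λ i - beta N k * T) = 0 :=
  stmt_10_general N k hk1 hk2 c hc Λ hΛ T hT
end

section
/- Let N ≥ 2 and Λ = (ρ_1,...,ρ_N) with ρ_1 ≤ ... ≤ ρ_N, T = Σ ρ_i, and β_2 = (1/N)(1 − √(2/((N−1)(N−2)))) with N ≥ 3. If σ_1(Λ − β_2(T,...,T)) > 0 and σ_2(Λ − β_2(T,...,T)) > 0, then ρ_2 > 0 and ρ_1 + ρ_j > 0 for every j ≥ 2; i.e., Λ is 2-positive. -/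
/-!
Put `a = Λ - β₂(T,…,T)` and `d = √(2(N-1)(N-2))`. Since `σ₂(a) > 0` we have `∑ aᵢ² < σ₁(a)²`, and
Cauchy–Schwarz on the `N - 2` entries other than `a₁, a₂` bounds `p = a₁ + a₂` by the quadratic
inequality `N p² - 4 σ₁(a) p + (6 - 2N) σ₁(a)² < 0`, whose smaller root is `σ₁(a)(2 - d)/N`.
The shift `β₂` is chosen so that this lower bound for `p` is exactly `-2β₂T`, i.e. `ρ₁ + ρ₂ > 0`;
monotonicity of `ρ` gives the rest.
-/

open Finset

theorem sigma1_sq (N : ℕ) (a : Fin N → ℝ) :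
    sigma1 N a ^ 2 = ∑ i, a i ^ 2 + 2 * sigma2 N a := by
  have hsplit : ∀ i j : Fin N, a i * a j = (if i = j then a i * a j else 0) +
      (if i < j then a i * a j else 0) + (if j < i then a j * a i else 0) := by
    intro i j
    rcases lt_trichotomy i j with h | rfl | h
    · simp [h, h.ne, h.not_gt]
    · simp
    · simp [h, h.ne', h.not_gt, mul_comm]
  have hlower : ∑ i, ∑ j, (if j < i then a j * a i else 0) = sigma2 N a := by
    rw [sum_comm]
    simp only [sigma2, sum_filter]
  rw [sigma1, sq, sum_mul_sum, sum_congr rfl fun i _ => sum_congr rfl fun j _ => hsplit i j]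
  simp only [sum_add_distrib, hlower, sum_ite_eq, mem_univ, if_true, sigma2, sum_filter, sq]
  ring

theorem sum_sq_lt_sigma1_sq {N : ℕ} {a : Fin N → ℝ} (h2 : 0 < sigma2 N a) :
    ∑ i, a i ^ 2 < sigma1 N a ^ 2 := by
  rw [sigma1_sq]; linarith

theorem sq_sum_sub_pair_le {ι : Type*} [Fintype ι] [DecidableEq ι] (a : ι → ℝ) {i j : ι}
    (hij : i ≠ j) :
    (∑ k, a k - (a i + a j)) ^ 2 ≤
      (Fintype.card ι - 2 : ℝ) * (∑ k, a k ^ 2 - (a i ^ 2 + a j ^ 2)) := by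
  have hsub : ({i, j} : Finset ι) ⊆ univ := subset_univ _
  have hcard : ((univ \ {i, j}).card : ℝ) = Fintype.card ι - 2 := by
    rw [card_sdiff_of_subset hsub, card_univ, card_pair hij,
      Nat.cast_sub (by simpa [card_pair hij] using card_le_univ ({i, j} : Finset ι))]
    norm_num
  have hsum : ∀ f : ι → ℝ, ∑ k ∈ univ \ {i, j}, f k = ∑ k, f k - (f i + f j) := fun f => by
    rw [← sum_pair hij, eq_sub_iff_add_eq, sum_sdiff hsub]
  simpa only [hsum, hcard] using sq_sum_le_card_mul_sum_sq (s := univ \ {i, j}) (f := a)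

theorem mul_two_sub_lt_of_quadratic_neg {n s p d : ℝ} (hn : 0 < n) (hs : 0 < s) (hd : 0 ≤ d)
    (hd2 : d ^ 2 = 2 * ((n - 1) * (n - 2)))
    (hq : n * p ^ 2 - 4 * s * p + (6 - 2 * n) * s ^ 2 < 0) :
    s * (2 - d) < n * p := by
  have hfactor : (n * p - s * (2 - d)) * (n * p - s * (2 + d)) =
      n * (n * p ^ 2 - 4 * s * p + (6 - 2 * n) * s ^ 2) := by
    linear_combination (-s ^ 2) * hd2
  by_contra! hle
  have : 0 ≤ (n * p - s * (2 - d)) * (n * p - s * (2 + d)) :=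
    mul_nonneg_of_nonpos_of_nonpos (by linarith) (by nlinarith)
  nlinarith

theorem sigma1_mul_lt_of_sigma2_pos {N : ℕ} (hN : 3 ≤ N) {a : Fin N → ℝ}
    (h1 : 0 < sigma1 N a) (h2 : 0 < sigma2 N a) {i j : Fin N} (hij : i ≠ j) :
    sigma1 N a * (2 - √(2 * ((N - 1) * (N - 2)))) < N * (a i + a j) := by
  have hn : (3 : ℝ) ≤ N := by exact_mod_cast hN
  have hCS := sq_sum_sub_pair_le a hij
  rw [Fintype.card_fin] at hCS
  have hQ := sum_sq_lt_sigma1_sq h2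
  have hAM : (a i + a j) ^ 2 ≤ 2 * (a i ^ 2 + a j ^ 2) := by nlinarith [sq_nonneg (a i - a j)]
  rw [sigma1] at h1 hQ ⊢
  have hquad : N * (a i + a j) ^ 2 - 4 * (∑ k, a k) * (a i + a j) + (6 - 2 * N) * (∑ k, a k) ^ 2
      < 0 := by
    nlinarith [mul_lt_mul_of_pos_left hQ (by linarith : (0 : ℝ) < N - 2)]
  exact mul_two_sub_lt_of_quadratic_neg (by linarith) h1 (Real.sqrt_nonneg _)
    (Real.sq_sqrt (by nlinarith)) hquad

theorem sqrt_two_div_mul_sqrt_two_mul {m : ℝ} (hm : 0 < m) : √(2 / m) * √(2 * m) = 2 := by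
  rw [← Real.sqrt_mul (by positivity), div_mul_eq_mul_div, mul_div_assoc,
    mul_div_cancel_right₀ _ hm.ne', show (2 * 2 : ℝ) = 2 ^ 2 by norm_num, Real.sqrt_sq zero_le_two]

theorem stmt_15 (N : ℕ) (hN : 3 ≤ N) (ρ : Fin N → ℝ)
    (hmono : ∀ i j : Fin N, i ≤ j → ρ i ≤ ρ j)
    (T : ℝ) (hT : T = ∑ i, ρ i)
    (h1 : 0 < sigma1 N (fun i => ρ i - beta N 2 * T))
    (h2 : 0 < sigma2 N (fun i => ρ i - beta N 2 * T)) :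
    0 < ρ ⟨1, by omega⟩ ∧
      ∀ j : Fin N, 1 ≤ (j : ℕ) → 0 < ρ ⟨0, by omega⟩ + ρ j := by
  have hn : (3 : ℝ) ≤ N := by exact_mod_cast hN
  have hm : 0 < ((N : ℝ) - 1) * (N - 2) := by nlinarith
  set c := √(2 / ((N - 1) * (N - 2)))
  have hcd : c * √(2 * ((N - 1) * (N - 2))) = 2 := sqrt_two_div_mul_sqrt_two_mul hm
  have hbeta : N * beta N 2 = 1 - c := by
    simp only [beta, Nat.cast_ofNat, c]
    field_simp
  have hs : sigma1 N (fun i => ρ i - beta N 2 * T) = c * T := by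
    simp only [sigma1, sum_sub_distrib, sum_const, card_univ, Fintype.card_fin, nsmul_eq_mul, ← hT]
    linear_combination (-T) * hbeta
  have hcone := sigma1_mul_lt_of_sigma2_pos hN h1 h2 (i := ⟨0, by omega⟩) (j := ⟨1, by omega⟩)
    (by simp [Fin.ext_iff])
  rw [hs] at hcone
  have h01 : 0 < ρ ⟨0, by omega⟩ + ρ ⟨1, by omega⟩ := by
    refine pos_of_mul_pos_right (a := (N : ℝ)) ?_ (by positivity)
    linear_combination hcone - 2 * T * hbeta + T * hcd
  refine ⟨by linarith [hmono ⟨0, by omega⟩ ⟨1, by omega⟩ (Fin.mk_le_mk.2 zero_le_one)], ?_⟩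
  intro j hj
  linarith [hmono ⟨1, by omega⟩ j (Fin.mk_le_of_le_val hj)]
end
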